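/- Let F(t) = M + Ct for constants M, C ≥ 0, and suppose v : [0,T] × ℝ → ℝ is continuous, twice differentiable in x, once in t, satisfies ∂ₜv + f'(v)∂ₓv - ε∂²ₓₓv ≤ C on (0,T) × ℝ (with ε > 0, f ∈ C²), v is bounded, and v(0,x) ≤ M for all x. Then v(t,x) ≤ M + Ct for all (t,x) ∈ [0,T] × ℝ. -/

import Mathlib

/-!
For `η > 0` set `w = v - (M + C t) - η e^{L t} (1 + x²)` with `L = K + 2ε + 1`, where `K` bounds
the drift `f'(v)` on the (bounded) range of `v`. Since `v` is bounded above, `w` attains its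
maximum on every strip `[0, t'] × ℝ`. At a maximum with `t > 0` we would have `∂ₜw ≥ 0`,
`∂ₓw = 0` and `∂²ₓₓw ≤ 0`; inserted into the differential inequality these leave
`η e^{L t} (K (|x| - 1)² + (2ε + 1) x² + 1) ≤ 0`, which is absurd. So the maximum lies on
`t = 0`, where `w < 0`. Letting `η → 0` gives the bound for `t < T`, and continuity of `v`
extends it to `t = T`, where the differential inequality is not assumed.
-/

open Set Filter Topology Real

theorem IsLocalMax.hasDerivAt_deriv_nonpos {φ φ' : ℝ → ℝ} {a c : ℝ} (h : IsLocalMax φ a)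
    (hφ : ∀ᶠ y in 𝓝 a, HasDerivAt φ (φ' y) y) (hφ' : HasDerivAt φ' c a) : c ≤ 0 := by
  by_contra! hc
  have hderiv : deriv φ =ᶠ[𝓝 a] φ' := hφ.mono fun y hy => hy.deriv
  have hmin : IsLocalMin φ a :=
    isLocalMin_of_deriv_deriv_pos (by rwa [hderiv.deriv_eq, hφ'.deriv])
      (by rw [hderiv.eq_of_nhds]; exact h.hasDerivAt_eq_zero hφ.self_of_nhds)
      hφ.self_of_nhds.continuousAt
  have hconst : (fun _ => φ a) =ᶠ[𝓝 a] φ := (h.and hmin).mono fun y hy => le_antisymm hy.2 hy.1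
  have hzero : (fun _ => 0) =ᶠ[𝓝 a] φ' :=
    (hconst.eventuallyEq_nhds.and hφ).mono fun y hy =>
      (hasDerivAt_const y (φ a)).unique (hy.2.congr_of_eventuallyEq hy.1)
  exact hc.ne' ((hφ'.congr_of_eventuallyEq hzero).unique (hasDerivAt_const a 0))

theorem IsLocalMaxOn.hasDerivAt_Iic_nonneg {ψ : ℝ → ℝ} {a d : ℝ} (h : IsLocalMaxOn ψ (Iic a) a)
    (hψ : HasDerivAt ψ d a) : 0 ≤ d := by
  have := h.hasFDerivWithinAt_nonpos hψ.hasFDerivAt.hasFDerivWithinAt (y := -1)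
    (mem_posTangentConeAt_of_segment_subset ?_)
  · simpa using this
  · rw [segment_symm, segment_eq_Icc (by linarith)]
    exact Icc_subset_Iic_self

theorem exists_isMaxOn_prod_univ {X Y : Type*} [TopologicalSpace X] [T2Space X]
    [TopologicalSpace Y] {g : X × Y → ℝ} (hg : Continuous g) {A : Set X} (hA : IsCompact A)
    {p₀ : X × Y} (hp₀ : p₀ ∈ A ×ˢ univ) (hdecay : ∀ᶠ y in cocompact Y, ∀ s ∈ A, g (s, y) ≤ g p₀) :
    ∃ p ∈ A ×ˢ univ, IsMaxOn g (A ×ˢ univ) p := by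
  obtain ⟨K, hK, hKg⟩ := hasBasis_cocompact.eventually_iff.1 hdecay
  refine hg.continuousOn.exists_isMaxOn' (hA.isClosed.prod isClosed_univ) hp₀ <|
    (hasBasis_cocompact.inf_principal _).eventually_iff.2 ⟨A ×ˢ K, hA.prod hK, ?_⟩
  rintro ⟨s, y⟩ ⟨hsK, hs, -⟩
  exact hKg (fun hy => hsK ⟨hs, hy⟩) s hs

noncomputable def penalizedExcess (v : ℝ → ℝ → ℝ) (M C η L : ℝ) (p : ℝ × ℝ) : ℝ :=
  v p.1 p.2 - (M + C * p.1) - η * exp (L * p.1) * (1 + p.2 ^ 2)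

section Comparison

variable {v vt vx vxx : ℝ → ℝ → ℝ} {M C η L ε K B T t t' x : ℝ}

theorem continuous_penalizedExcess (hv : Continuous fun p : ℝ × ℝ => v p.1 p.2) :
    Continuous (penalizedExcess v M C η L) := by
  unfold penalizedExcess
  fun_prop

theorem hasDerivAt_penalizedExcess_time (hvt : HasDerivAt (fun s => v s x) (vt t x) t) :
    HasDerivAt (fun s => penalizedExcess v M C η L (s, x))
      (vt t x - C - η * (L * exp (L * t)) * (1 + x ^ 2)) t := by
  have hexp : HasDerivAt (fun s => exp (L * s)) (L * exp (L * t)) t := by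
    simpa [mul_comm] using ((hasDerivAt_id t).const_mul L).exp
  exact ((hvt.sub (((hasDerivAt_id t).const_mul C).const_add M)).sub
    ((hexp.const_mul η).mul_const (1 + x ^ 2))).congr_deriv (by ring)

theorem hasDerivAt_penalizedExcess_space (hvx : HasDerivAt (fun y => v t y) (vx t x) x) :
    HasDerivAt (fun y => penalizedExcess v M C η L (t, y))
      (vx t x - η * exp (L * t) * (2 * x)) x :=
  ((hvx.sub_const (M + C * t)).sub
    (((hasDerivAt_pow 2 x).const_add 1).const_mul (η * exp (L * t)))).congr_deriv (by ring)

theorem hasDerivAt_deriv_penalizedExcess_space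
    (hvxx : HasDerivAt (fun y => vx t y) (vxx t x) x) :
    HasDerivAt (fun y => vx t y - η * exp (L * t) * (2 * y))
      (vxx t x - η * exp (L * t) * 2) x :=
  (hvxx.sub (((hasDerivAt_id x).const_mul 2).const_mul (η * exp (L * t)))).congr_deriv
    (by ring)

theorem eventually_penalizedExcess_le (hB : ∀ t x, v t x ≤ B) (hη : 0 < η) (hL : 0 ≤ L) :
    ∀ᶠ y in cocompact ℝ, ∀ s ∈ Icc 0 t',
      penalizedExcess v M C η L (s, y) ≤ penalizedExcess v M C η L (0, 0) := by
  have hgrowth : Tendsto (fun y : ℝ => η * ‖y‖ ^ 2) (cocompact ℝ) atTop :=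
    ((tendsto_pow_atTop two_ne_zero).comp tendsto_norm_cocompact_atTop).const_mul_atTop hη
  filter_upwards [hgrowth.eventually_ge_atTop (B + |C| * t' - v 0 0)] with y hy s ⟨hs0, hst⟩
  rw [Real.norm_eq_abs, sq_abs] at hy
  have hexp : 1 ≤ exp (L * s) := one_le_exp (mul_nonneg hL hs0)
  have hCs : -(C * s) ≤ |C| * t' := by nlinarith [neg_abs_le C, abs_nonneg C]
  simp only [penalizedExcess, mul_zero, exp_zero]
  nlinarith [hB s y, mul_le_mul_of_nonneg_right hexp (by positivity : 0 ≤ η * (1 + y ^ 2))]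

theorem not_isMaxOn_penalizedExcess {b t₀ x₀ : ℝ} (hε : 0 ≤ ε) (hη : 0 < η) (ht₀ : 0 < t₀)
    (ht₀t' : t₀ ≤ t') (hvt : HasDerivAt (fun s => v s x₀) (vt t₀ x₀) t₀)
    (hvx : ∀ y, HasDerivAt (fun y => v t₀ y) (vx t₀ y) y)
    (hvxx : HasDerivAt (fun y => vx t₀ y) (vxx t₀ x₀) x₀) (hb : |b| ≤ K)
    (hpde : vt t₀ x₀ + b * vx t₀ x₀ - ε * vxx t₀ x₀ ≤ C) :
    ¬ IsMaxOn (penalizedExcess v M C η (K + 2 * ε + 1)) (Icc 0 t' ×ˢ univ) (t₀, x₀) := by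
  intro hmax
  set E := exp ((K + 2 * ε + 1) * t₀)
  have hE : 0 < η * E := mul_pos hη (exp_pos _)
  have hK : 0 ≤ K := (abs_nonneg b).trans hb
  have hx : IsLocalMax (fun y => penalizedExcess v M C η (K + 2 * ε + 1) (t₀, y)) x₀ :=
    Eventually.of_forall fun y => hmax ⟨⟨ht₀.le, ht₀t'⟩, mem_univ y⟩
  have ht : IsLocalMaxOn (fun s => penalizedExcess v M C η (K + 2 * ε + 1) (s, x₀)) (Iic t₀) t₀ :=
    mem_nhdsWithin.2 ⟨Ioi 0, isOpen_Ioi, ht₀, fun s ⟨hs0, hst⟩ =>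
      hmax ⟨⟨le_of_lt hs0, le_trans hst ht₀t'⟩, mem_univ _⟩⟩
  have hvx₀ : vx t₀ x₀ = η * E * (2 * x₀) :=
    sub_eq_zero.1 (hx.hasDerivAt_eq_zero (hasDerivAt_penalizedExcess_space (hvx x₀)))
  have hvxx₀ : vxx t₀ x₀ ≤ η * E * 2 :=
    sub_nonpos.1 (hx.hasDerivAt_deriv_nonpos
      (Eventually.of_forall fun y => hasDerivAt_penalizedExcess_space (hvx y))
      (hasDerivAt_deriv_penalizedExcess_space hvxx))
  have hvt₀ : C + η * ((K + 2 * ε + 1) * E) * (1 + x₀ ^ 2) ≤ vt t₀ x₀ := by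
    linarith [ht.hasDerivAt_Iic_nonneg (hasDerivAt_penalizedExcess_time hvt)]
  have hdrift : -(K * (η * E * (2 * |x₀|))) ≤ b * vx t₀ x₀ :=
    calc -(K * (η * E * (2 * |x₀|))) ≤ -|b * vx t₀ x₀| := by
          rw [abs_mul, hvx₀, abs_mul (η * E), abs_of_pos hE, abs_mul 2, abs_two]
          exact neg_le_neg (mul_le_mul_of_nonneg_right hb (by positivity))
      _ ≤ b * vx t₀ x₀ := neg_abs_le _
  have hgap : 0 < η * E * (K * (|x₀| - 1) ^ 2 + 2 * ε * |x₀| ^ 2 + 1 + |x₀| ^ 2) := by positivity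
  rw [← sq_abs x₀] at hvt₀
  linarith [mul_le_mul_of_nonneg_left hvxx₀ hε]

variable {a : ℝ → ℝ → ℝ}

theorem le_add_penalty_of_subsolution (hε : 0 ≤ ε) (hη : 0 < η)
    (hv : Continuous fun p : ℝ × ℝ => v p.1 p.2)
    (hvt : ∀ t x, HasDerivAt (fun s => v s x) (vt t x) t)
    (hvx : ∀ t x, HasDerivAt (fun y => v t y) (vx t x) x)
    (hvxx : ∀ t x, HasDerivAt (fun y => vx t y) (vxx t x) x)
    (hB : ∀ t x, v t x ≤ B) (ha : ∀ t x, |a t x| ≤ K)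
    (hineq : ∀ t x, 0 < t → t < T → vt t x + a t x * vx t x - ε * vxx t x ≤ C)
    (hinit : ∀ x, v 0 x ≤ M) (ht : t ∈ Ico 0 T) (x : ℝ) :
    v t x ≤ M + C * t + η * exp ((K + 2 * ε + 1) * t) * (1 + x ^ 2) := by
  have hL : 0 ≤ K + 2 * ε + 1 := by linarith [(abs_nonneg _).trans (ha 0 0)]
  obtain ⟨⟨t₀, x₀⟩, ⟨ht₀, -⟩, hmax⟩ :=
    exists_isMaxOn_prod_univ (continuous_penalizedExcess hv) isCompact_Icc (p₀ := (0, 0))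
      ⟨⟨le_rfl, ht.1⟩, mem_univ _⟩ (eventually_penalizedExcess_le (M := M) hB hη hL)
  have hmax_nonpos : penalizedExcess v M C η (K + 2 * ε + 1) (t₀, x₀) ≤ 0 := by
    rcases ht₀.1.eq_or_lt with rfl | hpos
    · simp only [penalizedExcess, mul_zero, exp_zero, add_zero]
      nlinarith [hinit x₀, sq_nonneg x₀]
    · exact absurd hmax (not_isMaxOn_penalizedExcess hε hη hpos ht₀.2 (hvt _ _) (hvx _)
        (hvxx _ _) (ha _ _) (hineq _ _ hpos (ht₀.2.trans_lt ht.2)))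
  have := (isMaxOn_iff.1 hmax (t, x) ⟨⟨ht.1, le_rfl⟩, mem_univ x⟩).trans hmax_nonpos
  simp only [penalizedExcess] at this
  linarith

theorem le_add_mul_of_subsolution (hε : 0 ≤ ε)
    (hv : Continuous fun p : ℝ × ℝ => v p.1 p.2)
    (hvt : ∀ t x, HasDerivAt (fun s => v s x) (vt t x) t)
    (hvx : ∀ t x, HasDerivAt (fun y => v t y) (vx t x) x)
    (hvxx : ∀ t x, HasDerivAt (fun y => vx t y) (vxx t x) x)
    (hB : ∀ t x, v t x ≤ B) (ha : ∀ t x, |a t x| ≤ K)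
    (hineq : ∀ t x, 0 < t → t < T → vt t x + a t x * vx t x - ε * vxx t x ≤ C)
    (hinit : ∀ x, v 0 x ≤ M) :
    ∀ t x, t ∈ Icc 0 T → v t x ≤ M + C * t := by
  intro t x ht
  have hIco : ∀ s ∈ Ico 0 T, v s x ≤ M + C * s := fun s hs =>
    le_of_forall_pos_le_add fun δ hδ => by
      have hw : 0 < exp ((K + 2 * ε + 1) * s) * (1 + x ^ 2) := by positivity
      have := le_add_penalty_of_subsolution hε (div_pos hδ hw) hv hvt hvx hvxx hB ha hineq hinit
        hs x
      rwa [mul_assoc, div_mul_cancel₀ _ hw.ne'] at this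
  rcases ht.1.eq_or_lt with rfl | ht0
  · simpa using hinit x
  · have hclosed : IsClosed {s | v s x ≤ M + C * s} :=
      isClosed_le (hv.comp (Continuous.prodMk_left x)) (by fun_prop)
    refine closure_minimal hIco hclosed ?_
    rwa [closure_Ico (ht0.trans_le ht.2).ne]

end Comparison

theorem stmt9_general (T ε C M : ℝ) (hε : 0 < ε)
    (f : ℝ → ℝ) (hf : ContDiff ℝ 2 f)
    (v vt vx vxx : ℝ → ℝ → ℝ)
    (hcont : Continuous fun p : ℝ × ℝ => v p.1 p.2)
    (hvt : ∀ t x, HasDerivAt (fun s => v s x) (vt t x) t)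
    (hvx : ∀ t x, HasDerivAt (fun y => v t y) (vx t x) x)
    (hvxx : ∀ t x, HasDerivAt (fun y => vx t y) (vxx t x) x)
    (hbdd : ∃ B : ℝ, ∀ t x, |v t x| ≤ B)
    (hineq : ∀ t x, 0 < t → t < T → vt t x + deriv f (v t x) * vx t x - ε * vxx t x ≤ C)
    (hinit : ∀ x, v 0 x ≤ M) :
    ∀ t x, t ∈ Icc 0 T → v t x ≤ M + C * t := by
  obtain ⟨B, hB⟩ := hbdd
  obtain ⟨K, hK⟩ := isCompact_Icc.exists_bound_of_continuousOn
    (hf.continuous_deriv one_le_two).continuousOn (s := Icc (-B) B)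
  exact le_add_mul_of_subsolution (a := fun t x => deriv f (v t x)) hε.le hcont hvt hvx hvxx
    (fun t x => (abs_le.1 (hB t x)).2) (fun t x => hK _ (abs_le.1 (hB t x))) hineq hinit

/-- Parabolic comparison principle (Lemma 2.5): if `∂ₜv + f'(v)∂ₓv - ε ∂²ₓₓv ≤ C` on
`(0,T) × ℝ`, `v` is bounded and `v(0,·) ≤ M`, then `v(t,x) ≤ M + Ct` on `[0,T] × ℝ`. -/
theorem stmt9 (T ε C M : ℝ) (hT : 0 < T) (hε : 0 < ε) (hC : 0 ≤ C) (hM : 0 ≤ M)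
    (f : ℝ → ℝ) (hf : ContDiff ℝ 2 f)
    (v vt vx vxx : ℝ → ℝ → ℝ)
    (hcont : Continuous fun p : ℝ × ℝ => v p.1 p.2)
    (hvt : ∀ t x, HasDerivAt (fun s => v s x) (vt t x) t)
    (hvx : ∀ t x, HasDerivAt (fun y => v t y) (vx t x) x)
    (hvxx : ∀ t x, HasDerivAt (fun y => vx t y) (vxx t x) x)
    (hbdd : ∃ B : ℝ, ∀ t x, |v t x| ≤ B)
    (hineq : ∀ t x, 0 < t → t < T → vt t x + deriv f (v t x) * vx t x - ε * vxx t x ≤ C)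
    (hinit : ∀ x, v 0 x ≤ M) :
    ∀ t x, t ∈ Icc 0 T → v t x ≤ M + C * t :=
  stmt9_general T ε C M hε f hf v vt vx vxx hcont hvt hvx hvxx hbdd hineq hinit
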